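/- Let a < b be integers, K : ℤ × ℤ → ℝ a kernel, f, g : ℤ → ℝ. Define the discrete right operator (ℰ_{b^-} f)(t) = ∑_{s=t}^{b-1} K(s,t) f(s), the backward difference (∇h)(t) = h(t) − h(t−1), the forward difference (Δh)(t) = h(t+1) − h(t), the left Caputo-type difference (ᴬᴮᶜₐ∇ g)(t) = ∑_{s=a+1}^{t} K(t,s) (∇g)(s), and the right Riemann–Liouville-type difference (ᴬᴮᴿ∇̂_b f)(t) = −(Δ (ℰ_{b^-} f))(t). Then ∑_{t=a+1}^{b-1} f(t) · (ᴬᴮᶜₐ∇ g)(t) = [g(b-1)(ℰ_{b^-} f)(b-1) − g(a)(ℰ_{b^-} f)(a)] + ∑_{t=a+1}^{b-1} g(t−1) · (ᴬᴮᴿ∇̂_b f)(t−1). -/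

import Mathlib

/-- Discrete right kernel operator `(ℰ_{b^-} f)(t) = ∑_{s=t}^{b-1} K(s,t) f(s)`. -/
noncomputable def Eright (K : ℤ × ℤ → ℝ) (b : ℤ) (f : ℤ → ℝ) (t : ℤ) : ℝ :=
  ∑ s ∈ Finset.Icc t (b - 1), K (s, t) * f s

/-- Left Caputo-type AB difference with kernel `K`. -/
noncomputable def ABCleft (K : ℤ × ℤ → ℝ) (a : ℤ) (g : ℤ → ℝ) (t : ℤ) : ℝ :=
  ∑ s ∈ Finset.Icc (a + 1) t, K (t, s) * (g s - g (s - 1))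

/-- Right Riemann–Liouville-type AB difference with kernel `K`. -/
noncomputable def ABRright (K : ℤ × ℤ → ℝ) (b : ℤ) (f : ℤ → ℝ) (t : ℤ) : ℝ :=
  -(Eright K b f (t + 1) - Eright K b f t)

/-! The left kernel operator is the transpose of the right one: `∑ f · ᴬᴮᶜₐ∇ g` and
`∑ ∇g · ℰ_{b^-} f` are both the sum of `f t · K (t, s) · ∇g s` over the triangle `a < s ≤ t < b`.
Abel summation then moves `∇` from `g` onto `ℰ_{b^-} f`, whose backward difference at `t` is minus
the right difference at `t - 1`. -/

open Finset

theorem Finset.sum_Icc_sub_pred_telescope {M : Type*} [AddCommGroup M] (F : ℤ → M) {a c : ℤ}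
    (hac : a ≤ c) : ∑ t ∈ Icc (a + 1) c, (F t - F (t - 1)) = F c - F a := by
  induction c, hac using Int.leInduction with
  | base => simp
  | succ c hac ih =>
    rw [← insert_Icc_sub_one_right_eq_Icc (by omega), sum_insert (by simp), add_sub_cancel_right,
      ih]
    abel

theorem Finset.sum_Icc_sub_pred_mul_by_parts {R : Type*} [CommRing R] (g h : ℤ → R) {a c : ℤ}
    (hac : a ≤ c) :
    ∑ t ∈ Icc (a + 1) c, (g t - g (t - 1)) * h t
      = g c * h c - g a * h a - ∑ t ∈ Icc (a + 1) c, g (t - 1) * (h t - h (t - 1)) := by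
  rw [← sum_Icc_sub_pred_telescope (fun t ↦ g t * h t) hac, eq_sub_iff_add_eq, ← sum_add_distrib]
  exact sum_congr rfl fun t _ ↦ by ring

theorem sum_mul_ABCleft_eq_sum_mul_Eright (K : ℤ × ℤ → ℝ) (a b : ℤ) (f g : ℤ → ℝ) :
    ∑ t ∈ Icc (a + 1) (b - 1), f t * ABCleft K a g t
      = ∑ s ∈ Icc (a + 1) (b - 1), (g s - g (s - 1)) * Eright K b f s := by
  simp only [ABCleft, Eright, mul_sum]
  rw [sum_comm' (t' := Icc (a + 1) (b - 1)) (s' := fun s ↦ Icc s (b - 1))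
    (h := fun t s ↦ by simp only [mem_Icc]; omega)]
  exact sum_congr rfl fun s _ ↦ sum_congr rfl fun t _ ↦ by ring

theorem ABRright_sub_one (K : ℤ × ℤ → ℝ) (b : ℤ) (f : ℤ → ℝ) (t : ℤ) :
    ABRright K b f (t - 1) = -(Eright K b f t - Eright K b f (t - 1)) := by
  rw [ABRright, sub_add_cancel]

theorem ABC_left_ABR_right_by_parts
    (a b : ℤ) (hab : a < b) (K : ℤ × ℤ → ℝ) (f g : ℤ → ℝ) :
    ∑ t ∈ Finset.Icc (a + 1) (b - 1), f t * ABCleft K a g t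
    = (g (b - 1) * Eright K b f (b - 1) - g a * Eright K b f a)
      + ∑ t ∈ Finset.Icc (a + 1) (b - 1), g (t - 1) * ABRright K b f (t - 1) := by
  rw [sum_mul_ABCleft_eq_sum_mul_Eright, sum_Icc_sub_pred_mul_by_parts g _ (by omega : a ≤ b - 1)]
  simp only [ABRright_sub_one, mul_neg, sum_neg_distrib]
  exact sub_eq_add_neg _ _
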